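/- arXiv:1501.04330 — 4 statements merged into one kernel-verified Lean document; each statement's English description precedes it below -/
import Mathlib

section
/- Let M_i be the block-tridiagonal matrices defined recursively by M₁ = E₁ and M_i = fromBlocks M_{i-1} N̄_i Q̄_i E_i, where E_i = [[-k_{i1},1],[-k_{i2},0]], N̄_i has the 2×2 block N = [[0,0],[0,1]] in its bottom position and zeros elsewhere, and Q̄_i has the block Q_i = [[0,k_{i1}],[0,k_{i2}]] in its rightmost position and zeros elsewhere. Then for i ≥ 3, the characteristic polynomial satisfies the recursion P_{M_i}(λ) = λ(λ + k_{i1})·P_{M_{i-1}}(λ) + k_{i2}·(P_{M_{i-1}}(λ) − λ(λ + k_{(i-1)1})·P_{M_{i-2}}(λ)). -/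
open Polynomial Matrix

/-- The block-tridiagonal matrices of the paper: `Mrec k i` is the matrix `M_{i+1}`
(of size `2(i+1) = 2*i+2`) built from the coefficient pairs `k 0, …, k i`,
where `k j = (k_{(j+1)1}, k_{(j+1)2})`. -/
def Mrec (k : ℕ → ℝ × ℝ) : (i : ℕ) → Matrix (Fin (2 * i + 2)) (Fin (2 * i + 2)) ℝ
  | 0 => !![-(k 0).1, 1; -(k 0).2, 0]
  | (i + 1) =>
    Matrix.reindex finSumFinEquiv finSumFinEquiv
      (Matrix.fromBlocks (Mrec k i)
        (Matrix.of fun (p : Fin (2 * i + 2)) (q : Fin 2) =>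
          if (p : ℕ) = 2 * i + 1 ∧ (q : ℕ) = 1 then (1 : ℝ) else 0)
        (Matrix.of fun (p : Fin 2) (q : Fin (2 * i + 2)) =>
          if (q : ℕ) = 2 * i + 1 then
            (if (p : ℕ) = 0 then (k (i + 1)).1 else (k (i + 1)).2) else 0)
        !![-(k (i + 1)).1, 1; -(k (i + 1)).2, 0])

/-!
Write `λ - M_i` as a 2×2 block matrix whose corner is `λ - E_i`. The off-diagonal blocks only
touch the last index of `M_{i-1}`, so in the Schur complement the correction `B adj(D) C` is
`k_{i2} λ` times the matrix unit at that index. The determinant of a rank-one update then gives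
`P_{M_i} = det (λ - E_i) · P_{M_{i-1}} - k_{i2} λ · m`, with `m` the last principal minor of
`λ - M_{i-1}`. That minor is block lower triangular, equal to `(λ + k_{(i-1)1}) P_{M_{i-2}}`, and
`det (λ - E_i) = λ (λ + k_{i1}) + k_{i2}`.
-/

namespace Matrix

variable {R : Type*} [CommRing R]

theorem det_add_single_self {n : Type*} [Fintype n] [DecidableEq n] (A : Matrix n n R) (i : n)
    (c : R) : det (A + single i i c) = det A + c * adjugate A i i := by
  have hrow : A + single i i c = A.updateRow i (A i + c • Pi.single i 1) := by
    ext p q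
    by_cases hp : p = i
    · subst hp; simp [single_apply, Pi.single_apply, eq_comm]
    · simp [hp, Ne.symm hp]
  rw [hrow, det_updateRow_add, det_updateRow_smul, updateRow_eq_self, adjugate_apply]

theorem adjugate_apply_last_last {n : ℕ} (A : Matrix (Fin (n + 1)) (Fin (n + 1)) R) :
    adjugate A (Fin.last n) (Fin.last n) = det (A.submatrix Fin.castSucc Fin.castSucc) := by
  rw [adjugate_fin_succ_eq_det_submatrix, Fin.succAbove_last, Even.neg_one_pow ⟨_, rfl⟩,
    one_mul]

variable {m n : Type*} [Fintype m] [DecidableEq m] [Fintype n] [DecidableEq n]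

theorem det_fromBlocks_of_mul_adjugate_mul_eq_single_of_field {K : Type*} [Field K]
    (A : Matrix m m K) (B : Matrix m n K) (C : Matrix n m K) (D : Matrix n n K) (hD : det D ≠ 0)
    {i : m} {s : K} (h : B * adjugate D * C = single i i s) :
    det (fromBlocks A B C D) = det D * det A - s * adjugate A i i := by
  have := invertibleOfIsUnitDet D (isUnit_iff_ne_zero.mpr hD)
  have hschur : B * ⅟D * C = single i i ((det D)⁻¹ * s) := by
    rw [invOf_eq_nonsing_inv, inv_def, Ring.inverse_eq_inv, Matrix.mul_smul, Matrix.smul_mul, h,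
      smul_single, smul_eq_mul]
  rw [det_fromBlocks₂₂, hschur, sub_eq_add_neg, single_neg, det_add_single_self]
  field_simp
  ring

theorem det_fromBlocks_of_mul_adjugate_mul_eq_single [IsDomain R]
    (A : Matrix m m R) (B : Matrix m n R) (C : Matrix n m R) (D : Matrix n n R) (hD : det D ≠ 0)
    {i : m} {s : R} (h : B * adjugate D * C = single i i s) :
    det (fromBlocks A B C D) = det D * det A - s * adjugate A i i := by
  let φ := algebraMap R (FractionRing R)
  have hφ : Function.Injective φ := IsFractionRing.injective R _
  have hD' : det (D.map φ) ≠ 0 := by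
    rw [← φ.mapMatrix_apply, ← φ.map_det]
    exact (map_ne_zero_iff φ hφ).mpr hD
  have h' : B.map φ * adjugate (D.map φ) * C.map φ = single i i (φ s) := by
    rw [← φ.mapMatrix_apply D, ← φ.map_adjugate, φ.mapMatrix_apply, ← Matrix.map_mul,
      ← Matrix.map_mul, h, map_single]
  apply hφ
  rw [φ.map_det, φ.mapMatrix_apply, fromBlocks_map,
    det_fromBlocks_of_mul_adjugate_mul_eq_single_of_field _ _ _ _ hD' h', ← φ.mapMatrix_apply A,
    ← φ.map_adjugate, φ.mapMatrix_apply]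
  simp [φ.map_det]

theorem det_submatrix_castSucc_reindex_fromBlocks {m n : ℕ} (A : Matrix (Fin m) (Fin m) R)
    (B : Matrix (Fin m) (Fin (n + 1)) R) (C : Matrix (Fin (n + 1)) (Fin m) R)
    (D : Matrix (Fin (n + 1)) (Fin (n + 1)) R) (hB : ∀ p q, B p (Fin.castSucc q) = 0) :
    det ((reindex finSumFinEquiv finSumFinEquiv (fromBlocks A B C D)).submatrix
        Fin.castSucc Fin.castSucc) =
      det A * det (D.submatrix Fin.castSucc Fin.castSucc) := by
  have hblocks : ((reindex finSumFinEquiv finSumFinEquiv (fromBlocks A B C D)).submatrix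
        Fin.castSucc Fin.castSucc).submatrix finSumFinEquiv finSumFinEquiv =
      fromBlocks A 0 (C.submatrix Fin.castSucc id) (D.submatrix Fin.castSucc Fin.castSucc) := by
    ext (p | p) (q | q) <;> simp [Fin.castSucc_castAdd, hB]
  rw [← det_submatrix_equiv_self finSumFinEquiv, hblocks, det_fromBlocks_zero₁₂]

end Matrix

namespace Mrec

def E (κ : ℝ × ℝ) : Matrix (Fin 2) (Fin 2) ℝ := !![-κ.1, 1; -κ.2, 0]

def Nbar (i : ℕ) : Matrix (Fin (2 * i + 2)) (Fin 2) ℝ :=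
  of fun p q => if (p : ℕ) = 2 * i + 1 ∧ (q : ℕ) = 1 then 1 else 0

def Qbar (κ : ℝ × ℝ) (i : ℕ) : Matrix (Fin 2) (Fin (2 * i + 2)) ℝ :=
  of fun p q => if (q : ℕ) = 2 * i + 1 then (if (p : ℕ) = 0 then κ.1 else κ.2) else 0

theorem succ_eq (k : ℕ → ℝ × ℝ) (i : ℕ) :
    Mrec k (i + 1) = reindex finSumFinEquiv finSumFinEquiv
      (fromBlocks (Mrec k i) (Nbar i) (Qbar (k (i + 1)) i) (E (k (i + 1)))) :=
  rfl

theorem charmatrix_succ (k : ℕ → ℝ × ℝ) (i : ℕ) :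
    charmatrix (Mrec k (i + 1)) = reindex finSumFinEquiv finSumFinEquiv
      (fromBlocks (charmatrix (Mrec k i)) (-(Nbar i).map C) (-(Qbar (k (i + 1)) i).map C)
        (charmatrix (E (k (i + 1))))) := by
  rw [succ_eq, charmatrix_reindex, charmatrix_fromBlocks]

theorem charpoly_E (κ : ℝ × ℝ) : (E κ).charpoly = X * (X + C κ.1) + C κ.2 := by
  rw [charpoly_fin_two, trace_fin_two, det_fin_two]
  simp [E]
  ring

theorem Nbar_mul_adjugate_mul_Qbar (κ : ℝ × ℝ) (i : ℕ) :
    -(Nbar i).map C * adjugate (charmatrix (E κ)) * -(Qbar κ i).map C =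
      single (Fin.last _) (Fin.last _) (C κ.2 * X) := by
  rw [adjugate_fin_two]
  ext p q : 1
  have hlast (r : Fin (2 * i + 2)) : Fin.last _ = r ↔ (r : ℕ) = 2 * i + 1 := by
    rw [eq_comm, Fin.ext_iff, Fin.val_last]
  simp only [mul_apply, Fin.sum_univ_two, Nbar, Qbar, E, of_apply, single_apply, hlast]
  by_cases hp : (p : ℕ) = 2 * i + 1 <;> by_cases hq : (q : ℕ) = 2 * i + 1 <;> simp [hp, hq]
  ring

theorem adjugate_charmatrix_succ_last (k : ℕ → ℝ × ℝ) (i : ℕ) :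
    adjugate (charmatrix (Mrec k (i + 1))) (Fin.last _) (Fin.last _) =
      (X + C (k (i + 1)).1) * charpoly (Mrec k i) := by
  rw [adjugate_apply_last_last, charmatrix_succ, det_submatrix_castSucc_reindex_fromBlocks]
  · rw [det_fin_one, mul_comm, charpoly]
    simp [E]
  · intro p q
    simp [Nbar]

end Mrec

theorem charpoly_Mrec_recursion (k : ℕ → ℝ × ℝ) (j : ℕ) :
    Matrix.charpoly (Mrec k (j + 2)) =
      X * (X + C (k (j + 2)).1) * Matrix.charpoly (Mrec k (j + 1)) +
        C (k (j + 2)).2 *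
          (Matrix.charpoly (Mrec k (j + 1)) -
            X * (X + C (k (j + 1)).1) * Matrix.charpoly (Mrec k j)) := by
  rw [charpoly, Mrec.charmatrix_succ, det_reindex_self,
    det_fromBlocks_of_mul_adjugate_mul_eq_single _ _ _ _ (charpoly_monic _).ne_zero
      (Mrec.Nbar_mul_adjugate_mul_Qbar _ _), ← charpoly, ← charpoly, Mrec.charpoly_E,
    Mrec.adjugate_charmatrix_succ_last]
  ring
end

section
/- If M is a real square matrix all of whose eigenvalues have negative real part, then there exists a symmetric positive definite matrix P such that PM + MᵀP = −I (existence of a Lyapunov solution). -/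
/-! If `σ(A) ∩ σ(B) = ∅` then `A X = X B` forces `X = 0`: the characteristic polynomial `χ_A`
kills `A`, so `X χ_A(B) = χ_A(A) X = 0`, while `χ_A(B)` is invertible by spectral mapping.
With `A = -Mᵀ`, `B = M` this makes `P ↦ P M + Mᵀ P` injective, hence bijective, for every Hurwitz
`M`; the solution of `P M + Mᵀ P = -1` is symmetric by uniqueness, and nonsingular because
`P x = 0` gives `-‖x‖² = xᵀ (P M + Mᵀ P) x = 0`.

For positive definiteness, the Hurwitz matrices form a star-convex set around `-1`, where the
solution is `1 / 2`, and the solution depends continuously on `M`. Along a connected family of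
symmetric nonsingular matrices positive definiteness is both an open and a closed condition
(positive semidefinite and nonsingular is positive definite), so it propagates from `-1` to `M`. -/

open Matrix Polynomial
open scoped Kronecker

theorem SemiconjBy.aeval {R A : Type*} [CommSemiring R] [Semiring A] [Algebra R A] {a b x : A}
    (h : SemiconjBy x a b) (p : R[X]) : SemiconjBy x (aeval a p) (aeval b p) := by
  induction p using Polynomial.induction_on' with
  | add p q hp hq => simpa only [map_add] using hp.add_right hq
  | monomial k c =>
    simpa only [aeval_monomial] using
      SemiconjBy.mul_right (Algebra.commute_algebraMap_right c x) (h.pow_right k)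

variable {n : Type*} [Fintype n]

section Spectrum

variable [DecidableEq n] {K : Type*} [Field K]

theorem Matrix.eq_zero_of_mul_eq_mul_of_disjoint_spectrum [IsAlgClosed K] {A B X : Matrix n n K}
    (hspec : Disjoint (spectrum K A) (spectrum K B)) (h : A * X = X * B) : X = 0 := by
  cases isEmpty_or_nonempty n
  · exact Subsingleton.elim _ _
  have hdeg : 0 < A.charpoly.degree := by
    rw [charpoly_degree_eq_dim]
    exact_mod_cast Fintype.card_pos
  have hunit : IsUnit (aeval B A.charpoly) := by
    rw [← spectrum.zero_notMem_iff K, spectrum.map_polynomial_aeval_of_degree_pos _ _ hdeg]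
    rintro ⟨μ, hμB, hμA⟩
    exact hspec.notMem_of_mem_right hμB (mem_spectrum_iff_isRoot_charpoly.mpr hμA)
  rw [← hunit.mul_left_eq_zero, (SemiconjBy.aeval h.symm A.charpoly).eq, aeval_self_charpoly,
    zero_mul]

theorem Matrix.spectrum_transpose (A : Matrix n n K) : spectrum K Aᵀ = spectrum K A := by
  ext μ
  rw [mem_spectrum_iff_isRoot_charpoly, mem_spectrum_iff_isRoot_charpoly, charpoly_transpose]

end Spectrum

section QuadraticForm

theorem Matrix.isOpen_setOf_forall_dotProduct_mulVec_pos :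
    IsOpen {A : Matrix n n ℝ | ∀ x ≠ 0, 0 < x ⬝ᵥ A *ᵥ x} := by
  rw [← isClosed_compl_iff]
  have hcompl : {A : Matrix n n ℝ | ∀ x ≠ 0, 0 < x ⬝ᵥ A *ᵥ x}ᶜ = Prod.fst ''
      {p : Matrix n n ℝ × Metric.sphere (0 : n → ℝ) 1 | p.2.1 ⬝ᵥ p.1 *ᵥ p.2.1 ≤ 0} := by
    ext A
    simp only [Set.mem_compl_iff, Set.mem_ofPred_eq, not_forall, not_lt, Set.mem_image,
      Prod.exists, exists_and_right, exists_eq_right, Subtype.exists, mem_sphere_iff_norm,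
      sub_zero, exists_prop]
    constructor
    · rintro ⟨x, hx, hAx⟩
      refine ⟨‖x‖⁻¹ • x, by simp [norm_smul, norm_ne_zero_iff.mpr hx], ?_⟩
      rw [mulVec_smul, smul_dotProduct, dotProduct_smul, smul_eq_mul, smul_eq_mul, ← mul_assoc]
      exact mul_nonpos_of_nonneg_of_nonpos (by positivity) hAx
    · rintro ⟨y, hy, hAy⟩
      exact ⟨y, fun h => by simp [h] at hy, hAy⟩
  rw [hcompl]
  exact isClosedMap_fst_of_compactSpace _ (isClosed_le (by fun_prop) continuous_const)

theorem Matrix.isClosed_setOf_forall_dotProduct_mulVec_nonneg :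
    IsClosed {A : Matrix n n ℝ | ∀ x, 0 ≤ x ⬝ᵥ A *ᵥ x} := by
  simp only [Set.ofPred_forall]
  exact isClosed_iInter fun x => isClosed_le continuous_const (by fun_prop)

theorem Matrix.posDef_of_preconnectedSpace [DecidableEq n] {X : Type*} [TopologicalSpace X]
    [PreconnectedSpace X] {f : X → Matrix n n ℝ} (hf : Continuous f)
    (hherm : ∀ x, (f x).IsHermitian) (hunit : ∀ x, IsUnit (f x)) {x₀ : X} (h₀ : (f x₀).PosDef)
    (x : X) : (f x).PosDef := by
  have hopen : {x | (f x).PosDef} = f ⁻¹' {A | ∀ v ≠ 0, 0 < v ⬝ᵥ A *ᵥ v} := by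
    ext x
    simp only [Set.mem_ofPred_eq, Set.mem_preimage, posDef_iff_dotProduct_mulVec, hherm x,
      true_and, star_trivial]
  have hclosed : {x | (f x).PosDef} = f ⁻¹' {A | ∀ v, 0 ≤ v ⬝ᵥ A *ᵥ v} := by
    ext x
    refine ⟨fun h v => by simpa using h.posSemidef.dotProduct_mulVec_nonneg v, fun h => ?_⟩
    have hpsd := PosSemidef.of_dotProduct_mulVec_nonneg (hherm x) (by simpa using h)
    exact hpsd.posDef_iff_isUnit.mpr (hunit x)
  have hclopen : IsClopen {x | (f x).PosDef} :=
    ⟨hclosed ▸ isClosed_setOf_forall_dotProduct_mulVec_nonneg.preimage hf,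
      hopen ▸ isOpen_setOf_forall_dotProduct_mulVec_pos.preimage hf⟩
  exact Set.eq_univ_iff_forall.mp (hclopen.eq_univ ⟨x₀, h₀⟩) x

end QuadraticForm

section Lyapunov

variable [DecidableEq n] {K : Type*} [Field K]

def Matrix.lyapunovMatrix (A : Matrix n n K) : Matrix (n × n) (n × n) K :=
  Aᵀ ⊗ₖ 1 + 1 ⊗ₖ Aᵀ

theorem Matrix.lyapunovMatrix_mulVec_vec (A P : Matrix n n K) :
    A.lyapunovMatrix *ᵥ vec P = vec (P * A + Aᵀ * P) := by
  rw [lyapunovMatrix, add_mulVec, kronecker_mulVec_vec, kronecker_mulVec_vec, transpose_transpose,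
    transpose_one, Matrix.one_mul, Matrix.mul_one, vec_add]

theorem Matrix.isUnit_lyapunovMatrix {A : Matrix n n K}
    (hA : ∀ P : Matrix n n K, P * A + Aᵀ * P = 0 → P = 0) : IsUnit A.lyapunovMatrix := by
  refine mulVec_injective_iff_isUnit.mp fun v w hvw => sub_eq_zero.mp ?_
  obtain ⟨P, hP⟩ := vec_bijective.surjective (v - w)
  rw [← hP, ← vec_zero, vec_inj]
  refine hA P (vec_inj.mp ?_)
  rw [← lyapunovMatrix_mulVec_vec, hP, mulVec_sub, hvw, sub_self, vec_zero]

noncomputable def Matrix.lyapunovSolution (A : Matrix n n K) : Matrix n n K :=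
  of fun i j => (A.lyapunovMatrix⁻¹ *ᵥ vec (-1)) (j, i)

theorem Matrix.lyapunovSolution_mul_add {A : Matrix n n K} (hA : IsUnit A.lyapunovMatrix) :
    A.lyapunovSolution * A + Aᵀ * A.lyapunovSolution = -1 := by
  rw [← vec_inj, ← lyapunovMatrix_mulVec_vec]
  change A.lyapunovMatrix *ᵥ (A.lyapunovMatrix⁻¹ *ᵥ vec (-1)) = _
  rw [mulVec_mulVec, mul_nonsing_inv _ ((isUnit_iff_isUnit_det _).mp hA), one_mulVec]

theorem Matrix.continuousAt_lyapunovSolution [TopologicalSpace K] [IsTopologicalDivisionRing K]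
    {A : Matrix n n K} (hA : IsUnit A.lyapunovMatrix) : ContinuousAt lyapunovSolution A := by
  have hK : Continuous (lyapunovMatrix : Matrix n n K → _) := by
    refine continuous_matrix fun i j => ?_
    simp only [lyapunovMatrix, add_apply, kroneckerMap_apply, transpose_apply]
    fun_prop
  have hinv : ContinuousAt Inv.inv A.lyapunovMatrix := by
    refine continuousAt_matrix_inv _ ?_
    rw [Ring.inverse_eq_inv']
    exact continuousAt_inv₀ ((isUnit_iff_isUnit_det _).mp hA).ne_zero
  have hsol : Continuous fun N : Matrix (n × n) (n × n) K => of fun i j => (N *ᵥ vec (-1)) (j, i) :=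
    continuous_matrix fun i j => by fun_prop
  exact hsol.continuousAt.comp (hinv.comp hK.continuousAt)

theorem Matrix.isUnit_of_mul_add_transpose_mul_eq_neg_one [LinearOrder K] [IsStrictOrderedRing K]
    {A P : Matrix n n K} (hP : P.IsSymm) (h : P * A + Aᵀ * P = -1) : IsUnit P := by
  refine mulVec_injective_iff_isUnit.mp ((injective_iff_map_eq_zero P.mulVecLin).mpr fun x hx => ?_)
  change P *ᵥ x = 0 at hx
  have hxP : x ᵥ* P = 0 := by rw [← hP, vecMul_transpose, hx]
  have hquad : x ⬝ᵥ (P * A + Aᵀ * P) *ᵥ x = 0 := by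
    rw [add_mulVec, ← mulVec_mulVec, ← mulVec_mulVec, hx, mulVec_zero, dotProduct_add,
      dotProduct_mulVec, hxP, zero_dotProduct, dotProduct_zero, add_zero]
  rw [h, neg_mulVec, one_mulVec, dotProduct_neg, neg_eq_zero] at hquad
  exact dotProduct_self_eq_zero.mp hquad

end Lyapunov

section Hurwitz

variable [DecidableEq n]

def Matrix.IsHurwitz (A : Matrix n n ℝ) : Prop :=
  ∀ μ ∈ spectrum ℂ (A.map Complex.ofReal), μ.re < 0

theorem Matrix.IsHurwitz.eq_zero_of_mul_add_transpose_mul_eq_zero {A P : Matrix n n ℝ}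
    (hA : A.IsHurwitz) (h : P * A + Aᵀ * P = 0) : P = 0 := by
  set f : Matrix n n ℝ →+* Matrix n n ℂ := Complex.ofRealHom.mapMatrix
  have hspec : Disjoint (spectrum ℂ (-(f A)ᵀ)) (spectrum ℂ (f A)) := by
    rw [Set.disjoint_left, ← spectrum.neg_eq, spectrum_transpose]
    intro μ hμ hμ'
    have h₁ := hA _ (Set.mem_neg.mp hμ)
    have h₂ := hA _ hμ'
    rw [Complex.neg_re] at h₁
    linarith
  have hc : -(f A)ᵀ * f P = f P * f A := by
    have hT : (f A)ᵀ = f Aᵀ := rfl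
    rw [neg_mul, neg_eq_iff_add_eq_zero, add_comm, hT, ← map_mul, ← map_mul, ← map_add, h,
      map_zero]
  exact map_injective Complex.ofReal_injective (eq_zero_of_mul_eq_mul_of_disjoint_spectrum hspec hc)

theorem Matrix.starConvex_setOf_isHurwitz :
    StarConvex ℝ (-1) {A : Matrix n n ℝ | A.IsHurwitz} := by
  intro A hA a b ha hb hab μ hμ
  cases isEmpty_or_nonempty n
  · simp [spectrum.of_subsingleton] at hμ
  have hmap : (a • (-1) + b • A).map Complex.ofReal
      = -algebraMap ℂ _ a + (b : ℂ) • A.map Complex.ofReal := by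
    ext i j
    by_cases hij : i = j <;> simp [hij, algebraMap_matrix_apply]
  rw [hmap, ← spectrum.add_mem_iff] at hμ
  obtain rfl | hb := hb.eq_or_lt
  · rw [Complex.ofReal_zero, zero_smul, spectrum.zero_eq, Set.mem_singleton_iff,
      add_eq_zero_iff_eq_neg] at hμ
    rw [hμ, Complex.neg_re, Complex.ofReal_re]
    linarith
  · have hb' : (b : ℂ) ≠ 0 := by exact_mod_cast hb.ne'
    rw [← Units.val_mk0 hb', ← Units.smul_def, spectrum.unit_smul_eq_smul] at hμ
    obtain ⟨ν, hν, hνμ⟩ := hμ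
    have hre := congrArg Complex.re hνμ
    simp only [Units.val_mk0, smul_eq_mul, Complex.mul_re, Complex.ofReal_re, Complex.ofReal_im,
      zero_mul, sub_zero, Complex.add_re] at hre
    linarith [mul_neg_of_pos_of_neg hb (hA ν hν)]

theorem Matrix.IsHurwitz.isUnit_lyapunovMatrix {A : Matrix n n ℝ} (hA : A.IsHurwitz) :
    IsUnit A.lyapunovMatrix :=
  Matrix.isUnit_lyapunovMatrix fun _ => hA.eq_zero_of_mul_add_transpose_mul_eq_zero

theorem Matrix.IsHurwitz.eq_lyapunovSolution {A P : Matrix n n ℝ} (hA : A.IsHurwitz)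
    (h : P * A + Aᵀ * P = -1) : P = A.lyapunovSolution := by
  refine sub_eq_zero.mp (hA.eq_zero_of_mul_add_transpose_mul_eq_zero ?_)
  rw [Matrix.sub_mul, Matrix.mul_sub, sub_add_sub_comm, h,
    lyapunovSolution_mul_add hA.isUnit_lyapunovMatrix, sub_self]

theorem Matrix.IsHurwitz.isSymm_lyapunovSolution {A : Matrix n n ℝ} (hA : A.IsHurwitz) :
    A.lyapunovSolution.IsSymm := by
  refine hA.eq_lyapunovSolution ?_
  have h := congrArg transpose (lyapunovSolution_mul_add hA.isUnit_lyapunovMatrix)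
  rwa [transpose_add, transpose_mul, transpose_mul, transpose_transpose, transpose_neg,
    transpose_one, add_comm] at h

theorem Matrix.IsHurwitz.posDef_lyapunovSolution {A : Matrix n n ℝ} (hA : A.IsHurwitz) :
    A.lyapunovSolution.PosDef := by
  have hstar := starConvex_setOf_isHurwitz (n := n)
  have hneg : (-1 : Matrix n n ℝ).IsHurwitz := hstar.mem ⟨A, hA⟩
  have : PreconnectedSpace {B : Matrix n n ℝ | B.IsHurwitz} :=
    isPreconnected_iff_preconnectedSpace.mp (hstar.isPathConnected hneg).isConnected.isPreconnected
  have hcont : Continuous fun B : {B : Matrix n n ℝ | B.IsHurwitz} => B.1.lyapunovSolution :=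
    continuous_iff_continuousAt.mpr fun B => (continuousAt_lyapunovSolution
      B.2.isUnit_lyapunovMatrix).comp continuous_subtype_val.continuousAt
  have hhalf : (2⁻¹ : ℝ) • (1 : Matrix n n ℝ) = (-1 : Matrix n n ℝ).lyapunovSolution := by
    refine hneg.eq_lyapunovSolution ?_
    rw [transpose_neg, transpose_one, Matrix.mul_neg, Matrix.neg_mul, Matrix.mul_one,
      Matrix.one_mul, ← neg_add, ← two_smul ℝ, smul_smul]
    norm_num
  refine posDef_of_preconnectedSpace hcont
    (fun B => isHermitian_iff_isSymm.mpr B.2.isSymm_lyapunovSolution)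
    (fun B => isUnit_of_mul_add_transpose_mul_eq_neg_one B.2.isSymm_lyapunovSolution
      (lyapunovSolution_mul_add B.2.isUnit_lyapunovMatrix))
    (x₀ := ⟨-1, hneg⟩) ?_ ⟨A, hA⟩
  rw [← hhalf]
  exact PosDef.one.smul (by norm_num)

end Hurwitz

theorem lyapunov_equation_solvable (m : ℕ)
    (M : Matrix (Fin m) (Fin m) ℝ)
    (hM : ∀ μ : ℂ, (M.map Complex.ofReal).charpoly.IsRoot μ → μ.re < 0) :
    ∃ P : Matrix (Fin m) (Fin m) ℝ, P.IsSymm ∧ P.PosDef ∧ P * M + Mᵀ * P = -1 := by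
  have hM' : M.IsHurwitz := fun μ hμ => hM μ (mem_spectrum_iff_isRoot_charpoly.mp hμ)
  exact ⟨M.lyapunovSolution, hM'.isSymm_lyapunovSolution, hM'.posDef_lyapunovSolution,
    lyapunovSolution_mul_add hM'.isUnit_lyapunovMatrix⟩
end

section
/- Let V : ℝ → ℝ be differentiable and nonnegative, and suppose there are constants c > 0 and b ≥ 0 such that for all t ≥ 0, V(t) ≥ b implies V'(t) ≤ −c·V(t). Then for all t ≥ 0, V(t) ≤ max(exp(−c·t)·V(0), b). -/
/-!
While `V ≥ b`, the function `exp (c t) * V t` is nonincreasing, which gives the exponential bound.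
Once `V` has dropped below `b` it cannot climb back above it: wherever `V > b ≥ 0` its derivative
is at most `-c V < 0`.
-/

open Real Set

theorem image_le_exp_mul_of_deriv_le_neg_mul {f : ℝ → ℝ} {a t c : ℝ} (hat : a ≤ t)
    (hf : ContinuousOn f (Icc a t)) (hf' : DifferentiableOn ℝ f (Ioo a t))
    (hdecay : ∀ x ∈ Ioo a t, deriv f x ≤ -c * f x) :
    f t ≤ exp (-c * (t - a)) * f a := by
  set g : ℝ → ℝ := fun x ↦ exp (c * x) * f x with hg_def
  have hg_anti : AntitoneOn g (Icc a t) := by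
    rw [← interior_Icc] at hf' hdecay
    refine antitoneOn_of_deriv_nonpos (convex_Icc a t) (by fun_prop) (by fun_prop) fun x hx ↦ ?_
    have hfx : HasDerivAt f (deriv f x) x :=
      (hf'.differentiableAt (isOpen_interior.mem_nhds hx)).hasDerivAt
    have hgx : HasDerivAt g (exp (c * x) * (c * f x + deriv f x)) x := by
      refine (((hasDerivAt_id' x).const_mul c).exp.mul hfx).congr_deriv ?_
      ring
    rw [hgx.deriv]
    exact mul_nonpos_of_nonneg_of_nonpos (exp_pos _).le (by linarith [hdecay x hx])
  have hgt : g t ≤ g a := hg_anti ⟨le_rfl, hat⟩ ⟨hat, le_rfl⟩ hat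
  calc f t = exp (-c * t) * g t := by
        rw [hg_def, ← mul_assoc, ← exp_add]
        simp
    _ ≤ exp (-c * t) * g a := by gcongr
    _ = exp (-c * (t - a)) * f a := by
      rw [hg_def, ← mul_assoc, ← exp_add]
      ring_nf

theorem image_le_of_deriv_right_neg_above {f f' : ℝ → ℝ} {a t b : ℝ}
    (hf : ContinuousOn f (Icc a t)) (hf' : ∀ x ∈ Ico a t, HasDerivWithinAt f (f' x) (Ici x) x)
    (ha : f a ≤ b) (hneg : ∀ x ∈ Ico a t, b < f x → f' x < 0) :
    ∀ ⦃x⦄, x ∈ Icc a t → f x ≤ b := by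
  intro x hx
  refine le_of_forall_pos_le_add fun ε hε ↦ ?_
  exact image_le_of_deriv_right_lt_deriv_boundary hf hf' (by linarith)
    (fun y ↦ hasDerivAt_const y (b + ε)) (fun y hy hfy ↦ hneg y hy (by linarith)) hx

theorem lyapunov_comparison_general (V : ℝ → ℝ) (hV : Differentiable ℝ V)
    (c b : ℝ) (hc : 0 < c) (hb : 0 ≤ b)
    (hdecay : ∀ t, 0 ≤ t → b ≤ V t → deriv V t ≤ -c * V t) :
    ∀ t, 0 ≤ t → V t ≤ max (Real.exp (-c * t) * V 0) b := by
  intro t ht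
  by_cases habove : ∀ x ∈ Ioo 0 t, b ≤ V x
  · refine le_max_of_le_left ?_
    simpa using image_le_exp_mul_of_deriv_le_neg_mul ht hV.continuous.continuousOn
      hV.differentiableOn fun x hx ↦ hdecay x hx.1.le (habove x hx)
  · push Not at habove
    obtain ⟨s, hs, hVs⟩ := habove
    refine le_max_of_le_right <| image_le_of_deriv_right_neg_above hV.continuous.continuousOn
      (fun x _ ↦ (hV x).hasDerivAt.hasDerivWithinAt) hVs.le (fun x hx hbx ↦ ?_) ⟨hs.2.le, le_rfl⟩
    have hVx_pos : 0 < V x := hb.trans_lt hbx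
    linarith [hdecay x (hs.1.le.trans hx.1) hbx.le, mul_pos hc hVx_pos]

theorem lyapunov_comparison (V : ℝ → ℝ) (hV : Differentiable ℝ V)
    (hVnonneg : ∀ t, 0 ≤ V t) (c b : ℝ) (hc : 0 < c) (hb : 0 ≤ b)
    (hdecay : ∀ t, 0 ≤ t → b ≤ V t → deriv V t ≤ -c * V t) :
    ∀ t, 0 ≤ t → V t ≤ max (Real.exp (-c * t) * V 0) b :=
  lyapunov_comparison_general V hV c b hc hb hdecay
end

section
/- Let A ∈ ℝ^{m×m} and suppose there exist a symmetric positive definite P, constants δ > 0 and ℓ* = 4δ‖P‖ such that PA + AᵀP = −I. Then for any ℓ ≥ ℓ* and any perturbation g : ℝ^m → ℝ^m with ‖g(ε)‖ ≤ δ‖ε‖ for all ε, the quadratic form V(ε) = εᵀPε satisfies, along any ε, the bound 2εᵀP(ℓAε + g(ε)) ≤ −(ℓ/2)‖ε‖². -/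
/-!
Since P is symmetric, the Lyapunov identity PA + AᵀP = -1 gives 2 εᵀPAε = -‖ε‖², so the drift
term contributes -ℓ‖ε‖². By Cauchy–Schwarz and the operator norm, 2 εᵀPw ≤ 2δ‖P‖‖ε‖², which is
at most (ℓ/2)‖ε‖² once ℓ ≥ 4δ‖P‖.
-/

open Matrix

section
variable {n R : Type*} [Fintype n] [CommRing R]

theorem Matrix.IsSymm.dotProduct_transpose_mul_mulVec {P : Matrix n n R} (hP : P.IsSymm)
    (A : Matrix n n R) (x : n → R) : x ⬝ᵥ (Aᵀ * P) *ᵥ x = x ⬝ᵥ (P * A) *ᵥ x := by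
  rw [dotProduct_mulVec, ← mulVec_transpose, transpose_mul, transpose_transpose, hP.eq,
    dotProduct_comm]

theorem two_mul_dotProduct_mulVec_mulVec_of_lyapunov [DecidableEq n] {A P : Matrix n n R}
    (hP : P.IsSymm) (hLyap : P * A + Aᵀ * P = -1) (x : n → R) :
    2 * (x ⬝ᵥ P *ᵥ A *ᵥ x) = -(x ⬝ᵥ x) := by
  have h := congrArg (fun M => x ⬝ᵥ M *ᵥ x) hLyap
  simp only [add_mulVec, dotProduct_add, hP.dotProduct_transpose_mul_mulVec, neg_mulVec,
    one_mulVec, dotProduct_neg] at h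
  rw [two_mul, mulVec_mulVec, h]

end

theorem EuclideanSpace.norm_toLp_eq_sqrt {n : Type*} [Fintype n] (x : n → ℝ) :
    ‖WithLp.toLp 2 x‖ = √(∑ i, x i ^ 2) := by
  rw [← EuclideanSpace.real_norm_sq_eq, Real.sqrt_sq (norm_nonneg _)]

theorem Matrix.dotProduct_mulVec_le_norm_toEuclideanCLM {n : Type*} [Fintype n] [DecidableEq n]
    (P : Matrix n n ℝ) (x y : n → ℝ) :
    x ⬝ᵥ P *ᵥ y ≤ ‖toEuclideanCLM (𝕜 := ℝ) P‖ * √(∑ i, x i ^ 2) * √(∑ i, y i ^ 2) := by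
  rw [← EuclideanSpace.norm_toLp_eq_sqrt, ← EuclideanSpace.norm_toLp_eq_sqrt,
    ← inner_toEuclideanCLM (x := WithLp.toLp 2 x) (y := WithLp.toLp 2 y)]
  calc _ ≤ ‖WithLp.toLp 2 x‖ * ‖toEuclideanCLM (𝕜 := ℝ) P (WithLp.toLp 2 y)‖ :=
        real_inner_le_norm _ _
    _ ≤ ‖WithLp.toLp 2 x‖ * (‖toEuclideanCLM (𝕜 := ℝ) P‖ * ‖WithLp.toLp 2 y‖) := by
        gcongr; exact ContinuousLinearMap.le_opNorm _ _
    _ = _ := by ring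

theorem lyapunov_derivative_bound_general (m : ℕ) (A P : Matrix (Fin m) (Fin m) ℝ)
    (hPsymm : P.IsSymm)
    (hLyap : P * A + Aᵀ * P = -1) (δ : ℝ) :
    ∀ ℓ : ℝ, 4 * δ * ‖Matrix.toEuclideanCLM (𝕜 := ℝ) P‖ ≤ ℓ →
      ∀ ε w : Fin m → ℝ,
        Real.sqrt (∑ i, w i ^ 2) ≤ δ * Real.sqrt (∑ i, ε i ^ 2) →
          2 * (ε ⬝ᵥ P.mulVec (ℓ • A.mulVec ε + w)) ≤ -(ℓ / 2) * (∑ i, ε i ^ 2) := by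
  intro ℓ hℓ ε w hw
  set S := ∑ i, ε i ^ 2
  set T := toEuclideanCLM (𝕜 := ℝ) P
  have hquad : 2 * (ε ⬝ᵥ P *ᵥ A *ᵥ ε) = -S := by
    rw [two_mul_dotProduct_mulVec_mulVec_of_lyapunov hPsymm hLyap]
    simp only [S, dotProduct, sq]
  have hS : 0 ≤ S := Finset.sum_nonneg fun i _ => sq_nonneg (ε i)
  have hpert : ε ⬝ᵥ P *ᵥ w ≤ δ * ‖T‖ * S :=
    calc ε ⬝ᵥ P *ᵥ w ≤ ‖T‖ * √S * √(∑ i, w i ^ 2) :=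
          P.dotProduct_mulVec_le_norm_toEuclideanCLM ε w
      _ ≤ ‖T‖ * √S * (δ * √S) := by gcongr
      _ = δ * ‖T‖ * S := by linear_combination δ * ‖T‖ * Real.mul_self_sqrt hS
  rw [mulVec_add, mulVec_smul, dotProduct_add, dotProduct_smul, smul_eq_mul]
  linear_combination ℓ * hquad + 2 * hpert + mul_nonneg (sub_nonneg.2 hℓ) hS / 2

theorem lyapunov_derivative_bound (m : ℕ) (A P : Matrix (Fin m) (Fin m) ℝ)
    (hPsymm : P.IsSymm) (hPpos : P.PosDef)
    (hLyap : P * A + Aᵀ * P = -1) (δ : ℝ) (hδ : 0 < δ) :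
    ∀ ℓ : ℝ, 4 * δ * ‖Matrix.toEuclideanCLM (𝕜 := ℝ) P‖ ≤ ℓ →
      ∀ ε w : Fin m → ℝ,
        Real.sqrt (∑ i, w i ^ 2) ≤ δ * Real.sqrt (∑ i, ε i ^ 2) →
          2 * (ε ⬝ᵥ P.mulVec (ℓ • A.mulVec ε + w)) ≤ -(ℓ / 2) * (∑ i, ε i ^ 2) :=
  lyapunov_derivative_bound_general m A P hPsymm hLyap δ
end
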